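/- Let λ ∈ P_I^+ and μ ∈ P with μ_+ = λ_+. If μ <_∅ λ, then μ_{I,+} <_∅ λ, where μ_{I,+} is the unique element of W_I·μ ∩ P_I^+. -/

import Mathlib

/-!
Common setting: a finite crystallographic root system `R` with Weyl group `W` in a
Euclidean space `V` (we identify `𝔞*` with `𝔞 = V` via the inner product), a fixed set
of positive roots `Rpos`, simple roots `Pi`, fundamental weights `fw`, the weight
lattice `P`, dominant weights `Pplus`, and for a subset `I ⊆ Pi` of the simple roots the
parabolic subgroup `W_I`, its positive roots `R_I^+`, `P_I^+`, the set `W^I` of minimal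
coset representatives, lengths, the Bruhat order, the orderings `⪯`, `≤_∅`, `≤_I`, the
group algebra `ℂ[P]`, the orbit sums `m_I(λ)`, the compact torus `A` (encoded abstractly
through its normalized Haar measure and its orthonormal multiplicative characters
`e^λ = ev λ`, `λ ∈ P`), the weight function `δ_k` and the inner product `(·,·)_k`.
-/

open scoped RealInnerProductSpace BigOperators Classical
open MeasureTheory

noncomputable section

variable {V : Type*} [NormedAddCommGroup V] [InnerProductSpace ℝ V] [FiniteDimensional ℝ V]

/-- A finite crystallographic root system in `V`, with a choice of positive roots,
the corresponding simple roots, and the fundamental weights. -/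
structure RootData (V : Type*) [NormedAddCommGroup V] [InnerProductSpace ℝ V] where
  R : Finset V
  Rpos : Finset V
  Pi : Finset V
  fw : V → V
  nonzero : ∀ α ∈ R, α ≠ 0
  reflect_mem : ∀ α ∈ R, ∀ β ∈ R, β - (2 * ⟪β, α⟫ / ⟪α, α⟫) • α ∈ R
  crystallographic : ∀ α ∈ R, ∀ β ∈ R, ∃ n : ℤ, 2 * ⟪β, α⟫ / ⟪α, α⟫ = (n : ℝ)
  pos_subset : Rpos ⊆ R
  pos_or_neg : ∀ α ∈ R, (α ∈ Rpos ↔ ¬ -α ∈ Rpos)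
  simple_subset : Pi ⊆ Rpos
  pos_comb : ∀ α ∈ Rpos, ∃ c : V → ℝ, (∀ β, 0 ≤ c β) ∧ α = ∑ β ∈ Pi, c β • β
  span_R : Submodule.span ℝ (R : Set V) = ⊤
  fw_prop : ∀ α ∈ Pi, ∀ β ∈ Pi, ⟪fw α, (2 / ⟪β, β⟫) • β⟫ = (if α = β then 1 else 0)

/-- The orthogonal reflection `s_α` in the hyperplane orthogonal to `α`. -/
def rRefl (α : V) : V ≃ₗᵢ[ℝ] V := Submodule.reflection (ℝ ∙ α)ᗮ

/-- The reflection group generated by the reflections in the elements of `S`. -/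
def weylGen (S : Finset V) : Subgroup (V ≃ₗᵢ[ℝ] V) :=
  Subgroup.closure { w | ∃ α ∈ S, w = rRefl α }

namespace RootData

variable (D : RootData V)

/-- The Weyl group `W`, generated by the simple reflections. -/
def Weyl : Subgroup (V ≃ₗᵢ[ℝ] V) := Subgroup.closure { w | ∃ α ∈ D.Pi, w = rRefl α }

/-- The parabolic subgroup `W_I` generated by the simple reflections from `I ⊆ Π`. -/
abbrev WeylP (_D : RootData V) (I : Finset V) : Subgroup (V ≃ₗᵢ[ℝ] V) := weylGen I

/-- `R_I^+ = R_I ∩ R^+`, the positive roots of the parabolic subsystem. -/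
def RposI (I : Finset V) : Set V :=
  { α : V | α ∈ D.Rpos ∧ α ∈ Submodule.span ℝ (I : Set V) }

/-- `W^I = {v ∈ W ∣ v(R_I^+) ⊆ R^+}`, the minimal coset representatives of `W/W_I`. -/
def WsetI (I : Finset V) : Set (V ≃ₗᵢ[ℝ] V) :=
  { v | v ∈ D.Weyl ∧ ∀ α ∈ D.RposI I, v α ∈ D.Rpos }

/-- The weight lattice `P = {λ ∣ (λ, α^∨) ∈ ℤ for all α ∈ R}`. -/
def P : Set V := { lam : V | ∀ α ∈ D.R, ∃ n : ℤ, 2 * ⟪lam, α⟫ / ⟪α, α⟫ = (n : ℝ) }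

/-- The dominant weights `P^+`. -/
def Pplus : Set V := { lam ∈ D.P | ∀ α ∈ D.Rpos, 0 ≤ ⟪lam, α⟫ }

/-- `P^- = -P^+`. -/
def Pminus : Set V := { lam ∈ D.P | ∀ α ∈ D.Rpos, ⟪lam, α⟫ ≤ 0 }

/-- `P_I^+ = {λ ∈ P ∣ (λ,α) ≥ 0 for all α ∈ R_I^+}`. -/
def PplusI (I : Finset V) : Set V := { lam ∈ D.P | ∀ α ∈ D.RposI I, 0 ≤ ⟪lam, α⟫ }

/-- `P_I^- = -P_I^+`. -/
def PminusI (I : Finset V) : Set V := { lam ∈ D.P | ∀ α ∈ D.RposI I, ⟪lam, α⟫ ≤ 0 }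

/-- The Steinberg weight `λ_v = Σ_{α ∈ Π, v⁻¹α < 0} ϖ_α`. -/
def steinberg (v : V ≃ₗᵢ[ℝ] V) : V :=
  ∑ α ∈ D.Pi.filter (fun α => v⁻¹ α ∉ D.Rpos), D.fw α

/-- The length of `w` : the minimal length of a word in the simple reflections
expressing `w`. -/
def len (w : V ≃ₗᵢ[ℝ] V) : ℕ :=
  sInf { n | ∃ l : List (V ≃ₗᵢ[ℝ] V),
    (∀ g ∈ l, ∃ α ∈ D.Pi, g = rRefl α) ∧ l.prod = w ∧ l.length = n }

/-- The Bruhat order on `W` (subword property): `u ≤ w` iff some reduced word for `w`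
has a subword which is a word for `u`. -/
def bruhatLE (u w : V ≃ₗᵢ[ℝ] V) : Prop :=
  ∃ l : List (V ≃ₗᵢ[ℝ] V),
    (∀ g ∈ l, ∃ α ∈ D.Pi, g = rRefl α) ∧ l.prod = w ∧ l.length = D.len w ∧
    ∃ l' : List (V ≃ₗᵢ[ℝ] V), l'.Sublist l ∧ l'.prod = u

def Dominant (lam : V) : Prop := ∀ α ∈ D.Rpos, 0 ≤ ⟪lam, α⟫

def AntiDominant (lam : V) : Prop := ∀ α ∈ D.Rpos, ⟪lam, α⟫ ≤ 0

def DominantI (I : Finset V) (lam : V) : Prop := ∀ α ∈ D.RposI I, 0 ≤ ⟪lam, α⟫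

/-- `w = v̄(λ)`, the shortest element of `W` with `w λ₊ = λ` (where `λ₊ = w⁻¹λ` is the
dominant representative of `W·λ`). -/
def IsVbar (lam : V) (w : V ≃ₗᵢ[ℝ] V) : Prop :=
  w ∈ D.Weyl ∧ D.Dominant (w⁻¹ lam) ∧
    ∀ u ∈ D.Weyl, D.Dominant (u⁻¹ lam) → D.len w ≤ D.len u

/-- `w = v(λ)`, the shortest element of `W` with `w λ = λ₋` antidominant. -/
def IsVmin (lam : V) (w : V ≃ₗᵢ[ℝ] V) : Prop :=
  w ∈ D.Weyl ∧ D.AntiDominant (w lam) ∧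
    ∀ u ∈ D.Weyl, D.AntiDominant (u lam) → D.len w ≤ D.len u

/-- `w = v̄_I(λ)`, the shortest element of `W_I` with `w λ_{I,+} = λ`. -/
def IsVbarI (I : Finset V) (lam : V) (w : V ≃ₗᵢ[ℝ] V) : Prop :=
  w ∈ D.WeylP I ∧ D.DominantI I (w⁻¹ lam) ∧
    ∀ u ∈ D.WeylP I, D.DominantI I (u⁻¹ lam) → D.len w ≤ D.len u

/-- `λ ⪯ μ` iff `μ - λ ∈ Q^+`. -/
def preceq (lam mu : V) : Prop :=
  ∃ c : V → ℕ, mu - lam = ∑ α ∈ D.Pi, (c α : ℝ) • α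

/-- The ordering `λ ≤_∅ μ` of Heckman: `λ₊ ≺ μ₊`, or `λ₊ = μ₊` and `v̄(λ) ≤ v̄(μ)` in the
Bruhat order. -/
def leEmpty (lam mu : V) : Prop :=
  ∃ lamP muP : V, lamP ∈ D.Pplus ∧ muP ∈ D.Pplus ∧
    (∃ w ∈ D.Weyl, w lamP = lam) ∧ (∃ w ∈ D.Weyl, w muP = mu) ∧
    ((D.preceq lamP muP ∧ lamP ≠ muP) ∨
      (lamP = muP ∧ ∃ vl vm : V ≃ₗᵢ[ℝ] V,
        D.IsVbar lam vl ∧ D.IsVbar mu vm ∧ D.bruhatLE vl vm))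

def ltEmpty (lam mu : V) : Prop := D.leEmpty lam mu ∧ lam ≠ mu

/-- `≤_I`, the restriction of `≤_∅` to `P_I^+`. -/
def leI (I : Finset V) (lam mu : V) : Prop :=
  lam ∈ D.PplusI I ∧ mu ∈ D.PplusI I ∧ D.leEmpty lam mu

def ltI (I : Finset V) (lam mu : V) : Prop := D.leI I lam mu ∧ lam ≠ mu

/-- `ρ(k) = ½ Σ_{α ∈ R^+} k_α α`. -/
def rho (k : V → ℝ) : V := (1/2 : ℝ) • ∑ α ∈ D.Rpos, k α • α

end RootData

/-- The action of `w ∈ W` on `ℂ[P] ⊆ ℂ[V]`, `e^λ ↦ e^{wλ}`. -/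
def wAct (w : V ≃ₗᵢ[ℝ] V) (f : AddMonoidAlgebra ℂ V) : AddMonoidAlgebra ℂ V :=
  AddMonoidAlgebra.ofCoeff (Finsupp.mapDomain ⇑w f.coeff)

/-- `e^λ ∈ ℂ[V]`. -/
def expw (lam : V) : AddMonoidAlgebra ℂ V := AddMonoidAlgebra.ofCoeff (Finsupp.single lam 1)

namespace RootData

variable (D : RootData V)

/-- The orbit `W_I · λ`. -/
def orbitI (I : Finset V) (lam : V) : Set V := { x | ∃ w ∈ D.WeylP I, w lam = x }

/-- `m_I(λ) = Σ_{μ ∈ W_I·λ} e^μ`. -/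
def mI (I : Finset V) (lam : V) : AddMonoidAlgebra ℂ V :=
  ∑ᶠ mu ∈ D.orbitI I lam, expw mu

/-- `ℂ[P]^H`: the `H`-invariant elements of the group algebra `ℂ[P]` (realized inside
`ℂ[V]` as the elements supported on the weight lattice `P`). -/
def invSet (H : Subgroup (V ≃ₗᵢ[ℝ] V)) : Set (AddMonoidAlgebra ℂ V) :=
  { f | (∀ x ∈ f.coeff.support, x ∈ D.P) ∧ ∀ w ∈ H, wAct w f = f }

end RootData

/-- The compact torus `A = i𝔞/(2πiQ^∨)`, encoded through an abstract probability space
together with the system of characters `ev λ = e^λ : A → ℂ`, `λ ∈ P`; the characters are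
multiplicative in `λ`, unimodular, and orthonormal with respect to the (normalized Haar)
measure `μ`.  This data determines the joint distribution of the characters and hence
all the integrals below agree with those over the actual torus. -/
structure TorusData (D : RootData V) (A : Type*) [MeasurableSpace A]
    (μ : Measure A) where
  ev : V → A → ℂ
  ev_add : ∀ lam ∈ D.P, ∀ mu ∈ D.P, ∀ t, ev (lam + mu) t = ev lam t * ev mu t
  ev_norm : ∀ lam ∈ D.P, ∀ t, ‖ev lam t‖ = 1
  ev_meas : ∀ lam ∈ D.P, Measurable (ev lam)
  ev_orth : ∀ lam ∈ D.P, ∀ mu ∈ D.P,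
    (∫ t, (starRingEnd ℂ) (ev lam t) * ev mu t ∂μ) = if lam = mu then 1 else 0

namespace TorusData

variable {D : RootData V} {A : Type*} [MeasurableSpace A] {μ : Measure A}

/-- Evaluation of a Laurent polynomial `f ∈ ℂ[P]` as a function on the torus. -/
def evalF (T : TorusData D A μ) (f : AddMonoidAlgebra ℂ V) (t : A) : ℂ :=
  Finsupp.sum f.coeff fun lam c => c * T.ev lam t

/-- The weight function `δ_k = ∏_{α∈R}(e^{α/2} - e^{-α/2})^{k_α}
= ∏_{α∈R^+} |e^α - 1|^{2k_α}` on `A` (the two expressions agree since `k` is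
`W`-invariant and `|e^{α/2}-e^{-α/2}|² = |e^α - 1|²` as `|e^{α/2}| = 1`). -/
def deltaK (T : TorusData D A μ) (k : V → ℝ) (t : A) : ℝ :=
  ∏ α ∈ D.Rpos, ‖T.ev α t - 1‖ ^ (2 * k α)

/-- The inner product `(φ,ψ)_k = ∫_A conj(φ(t)) ψ(t) δ_k(t) dt` on `ℂ[P]`. -/
def ipk (T : TorusData D A μ) (k : V → ℝ) (f g : AddMonoidAlgebra ℂ V) : ℂ :=
  ∫ t, (starRingEnd ℂ) (T.evalF f t) * T.evalF g t * ((T.deltaK k t : ℝ) : ℂ) ∂μ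

/-- The defining property of the nonsymmetric Jacobi polynomial `E(λ,k)`:
`E = e^λ + Σ_{μ <_∅ λ} c_μ e^μ` and `(E, e^μ)_k = 0` for all `μ <_∅ λ`. -/
def IsNonsymJacobi (T : TorusData D A μ) (k : V → ℝ) (lam : V)
    (E : AddMonoidAlgebra ℂ V) : Prop :=
  (∃ c : V →₀ ℂ, c lam = 1 ∧
      (∀ mu ∈ c.support, mu ∈ D.P ∧ (mu = lam ∨ D.ltEmpty mu lam)) ∧
      E = Finsupp.sum c fun mu a => a • expw mu) ∧
  ∀ mu ∈ D.P, D.ltEmpty mu lam → T.ipk k E (expw mu) = 0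

/-- The defining property of the Jacobi polynomial `p_I(λ,k)`:
`p ∈ ℂ[P]^{W_I}`, `p = m_I(λ) + Σ_{μ <_I λ} c_μ m_I(μ)`, and `(p, m_I(μ))_k = 0` for
all `μ <_I λ`. -/
def IsJacobiI (T : TorusData D A μ) (I : Finset V) (k : V → ℝ) (lam : V)
    (p : AddMonoidAlgebra ℂ V) : Prop :=
  p ∈ D.invSet (D.WeylP I) ∧
  (∃ c : V →₀ ℂ, c lam = 1 ∧
      (∀ mu ∈ c.support, mu ∈ D.PplusI I ∧ (mu = lam ∨ D.ltI I mu lam)) ∧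
      p = Finsupp.sum c fun mu a => a • D.mI I mu) ∧
  ∀ mu ∈ D.PplusI I, D.ltI I mu lam → T.ipk k p (D.mI I mu) = 0

end TorusData

/-!
Write `inversionCount y` for the number of lines `ℝβ`, `β ∈ R⁺`, on which `y` is negative. A simple
reflection `s_α` changes it by exactly one when `(y, α) ≠ 0`. Together with the exchange condition
this shows that `ℓ(v̄(y)) = inversionCount y`, and that every word `l` with `l⁻¹ y` dominant
contains a reduced word of `v̄(y)` as a subword.

Now descend from `μ` by simple reflections `s_β`, `β ∈ I`, with `(z, β) < 0`. Each step lowers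
`inversionCount` by one and deletes one letter of a reduced word. The descent ends at `μ_{I,+}`,
the only `I`-dominant point of `W_I μ`. So `v̄(μ_{I,+})` is a subword of `v̄(μ) ≤ v̄(λ)`, and it is
strictly shorter than `v̄(μ)` unless `μ_{I,+} = μ`; this rules out `μ_{I,+} = λ`. If instead
`μ₊ ≺ λ₊`, then `μ_{I,+}` has the same dominant representative as `μ`, and that representative
is unique.
-/

section

variable {E : Type*} [NormedAddCommGroup E] [InnerProductSpace ℝ E]

theorem rRefl_apply (α x : E) : rRefl α x = x - (2 * ⟪x, α⟫ / ⟪α, α⟫) • α := by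
  rw [rRefl, Submodule.reflection_orthogonal_apply, Submodule.reflection_singleton_apply,
    real_inner_self_eq_norm_sq, real_inner_comm]
  simp only [RCLike.ofReal_real_eq_id, id, two_smul, neg_sub, ← add_smul, ← two_mul,
    mul_div_assoc]

theorem rRefl_self (α : E) : rRefl α α = -α :=
  Submodule.reflection_orthogonalComplement_singleton_eq_neg α

theorem rRefl_rRefl (α x : E) : rRefl α (rRefl α x) = x :=
  Submodule.reflection_reflection _ x

theorem rRefl_mul_self (α : E) : rRefl α * rRefl α = 1 :=
  Submodule.reflection_mul_reflection _

theorem rRefl_inv (α : E) : (rRefl α)⁻¹ = rRefl α :=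
  Submodule.reflection_inv

theorem rRefl_eq_self_of_inner_eq_zero {α x : E} (h : ⟪x, α⟫ = 0) : rRefl α x = x := by
  simp [rRefl_apply, h]

theorem inner_rRefl_left (α x y : E) : ⟪rRefl α x, y⟫ = ⟪x, rRefl α y⟫ := by
  rw [← (rRefl α).inner_map_map x (rRefl α y), rRefl_rRefl]

theorem inner_rRefl_self_right (α x : E) : ⟪rRefl α x, α⟫ = -⟪x, α⟫ := by
  rw [inner_rRefl_left, rRefl_self, inner_neg_right]

theorem rRefl_smul {c : ℝ} (hc : c ≠ 0) (α : E) : rRefl (c • α) = rRefl α := by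
  simp only [rRefl, Submodule.span_singleton_smul_eq hc.isUnit]

theorem rRefl_conj (g : E ≃ₗᵢ[ℝ] E) (α : E) : rRefl (g α) = g * rRefl α * g⁻¹ := by
  ext x
  show _ = g (rRefl α (g⁻¹ x))
  rw [rRefl_apply, rRefl_apply, map_sub, map_smul, ← g.inner_map_map (g⁻¹ x),
    ← g.inner_map_map α α]
  simp

theorem rRefl_mem_weylGen {S : Finset E} {α : E} (hα : α ∈ S) : rRefl α ∈ weylGen S :=
  Subgroup.subset_closure ⟨α, hα, rfl⟩

theorem weylGen_mono {S T : Finset E} (h : S ⊆ T) : weylGen S ≤ weylGen T :=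
  Subgroup.closure_mono fun _ ⟨α, hα, hw⟩ => ⟨α, h hα, hw⟩

theorem mapsTo_of_mem_weylGen {S : Finset E} {s : Set E}
    (hs : ∀ α ∈ S, Set.MapsTo (rRefl α) s s) {w : E ≃ₗᵢ[ℝ] E} (hw : w ∈ weylGen S) :
    Set.MapsTo w s s := by
  induction hw using Subgroup.closure_induction'' with
  | mem _ h => obtain ⟨α, hα, rfl⟩ := h; exact hs α hα
  | inv_mem _ h => obtain ⟨α, hα, rfl⟩ := h; rw [rRefl_inv]; exact hs α hα
  | one => exact Set.mapsTo_id s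
  | mul _ _ _ _ hv hw => exact hv.comp hw

theorem apply_mem_span_of_mem_weylGen {J : Finset E} {w : E ≃ₗᵢ[ℝ] E} (hw : w ∈ weylGen J) {x : E}
    (hx : x ∈ Submodule.span ℝ (J : Set E)) : w x ∈ Submodule.span ℝ (J : Set E) := by
  refine mapsTo_of_mem_weylGen (fun α hα y hy => ?_) hw hx
  rw [rRefl_apply]
  exact sub_mem hy (Submodule.smul_mem _ _ (Submodule.subset_span hα))

def IsWord (S : Finset E) (l : List (E ≃ₗᵢ[ℝ] E)) : Prop :=
  ∀ g ∈ l, ∃ α ∈ S, g = rRefl α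

namespace IsWord

variable {S : Finset E} {l l' : List (E ≃ₗᵢ[ℝ] E)}

theorem cons_iff {g : E ≃ₗᵢ[ℝ] E} : IsWord S (g :: l) ↔ (∃ α ∈ S, g = rRefl α) ∧ IsWord S l :=
  List.forall_mem_cons

theorem append_iff : IsWord S (l ++ l') ↔ IsWord S l ∧ IsWord S l' :=
  List.forall_mem_append

theorem singleton {α : E} (hα : α ∈ S) : IsWord S [rRefl α] := by
  simpa [IsWord] using ⟨α, hα, rfl⟩

theorem sublist (h : IsWord S l) (hl : l'.Sublist l) : IsWord S l' :=
  fun g hg => h g (hl.subset hg)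

theorem mono {T : Finset E} (h : IsWord S l) (hST : S ⊆ T) : IsWord T l :=
  fun g hg => (h g hg).imp fun _ ⟨hα, hg⟩ => ⟨hST hα, hg⟩

theorem prod_mem (h : IsWord S l) : l.prod ∈ weylGen S :=
  list_prod_mem fun g hg => by
    obtain ⟨α, hα, rfl⟩ := h g hg
    exact rRefl_mem_weylGen hα

end IsWord

theorem exists_isWord_prod_eq {S : Finset E} {w : E ≃ₗᵢ[ℝ] E} (hw : w ∈ weylGen S) :
    ∃ l, IsWord S l ∧ l.prod = w := by
  induction hw using Subgroup.closure_induction'' with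
  | mem _ h => obtain ⟨α, hα, rfl⟩ := h; exact ⟨_, .singleton hα, by simp⟩
  | inv_mem _ h => obtain ⟨α, hα, rfl⟩ := h; exact ⟨_, .singleton hα, by simp [rRefl_inv]⟩
  | one => exact ⟨[], fun _ h => by simp at h, rfl⟩
  | mul _ _ _ _ hv hw =>
    obtain ⟨l, hl, rfl⟩ := hv
    obtain ⟨l', hl', rfl⟩ := hw
    exact ⟨l ++ l', IsWord.append_iff.2 ⟨hl, hl'⟩, List.prod_append⟩

theorem inv_prod_cons_rRefl_apply (α : E) (l : List (E ≃ₗᵢ[ℝ] E)) (y : E) :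
    (rRefl α :: l).prod⁻¹ y = l.prod⁻¹ (rRefl α y) := by
  rw [List.prod_cons, mul_inv_rev, rRefl_inv]
  rfl

namespace RootData

variable {D : RootData E}

theorem weylP_le_weyl {I : Finset E} (hI : I ⊆ D.Pi) : D.WeylP I ≤ D.Weyl :=
  weylGen_mono hI

theorem mem_R_of_mem_Pi {α : E} (hα : α ∈ D.Pi) : α ∈ D.R :=
  D.pos_subset (D.simple_subset hα)

theorem ne_zero_of_mem_Rpos {α : E} (hα : α ∈ D.Rpos) : α ≠ 0 :=
  D.nonzero α (D.pos_subset hα)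

theorem neg_mem_Rpos_of_notMem {β : E} (hβ : β ∈ D.R) (h : β ∉ D.Rpos) : -β ∈ D.Rpos :=
  not_not.1 fun h' => h ((D.pos_or_neg β hβ).2 h')

theorem neg_notMem_Rpos {β : E} (hβ : β ∈ D.Rpos) : -β ∉ D.Rpos :=
  (D.pos_or_neg β (D.pos_subset hβ)).1 hβ

theorem rRefl_mem_R {α β : E} (hα : α ∈ D.R) (hβ : β ∈ D.R) : rRefl α β ∈ D.R := by
  rw [rRefl_apply]
  exact D.reflect_mem α hα β hβ

theorem apply_mem_R {w : E ≃ₗᵢ[ℝ] E} (hw : w ∈ D.Weyl) {β : E} (hβ : β ∈ D.R) : w β ∈ D.R :=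
  mapsTo_of_mem_weylGen (s := D.R) (fun _ hα _ hx => rRefl_mem_R (mem_R_of_mem_Pi hα) hx) hw hβ

theorem inner_fw {α β : E} (hα : α ∈ D.Pi) (hβ : β ∈ D.Pi) :
    ⟪D.fw α, β⟫ = if α = β then ⟪β, β⟫ / 2 else 0 := by
  have hββ : ⟪β, β⟫ ≠ 0 := inner_self_ne_zero.2 (ne_zero_of_mem_Rpos (D.simple_subset hβ))
  have h := D.fw_prop α hα β hβ
  rw [real_inner_smul_right] at h
  split_ifs at h ⊢
  · field_simp at h ⊢
    linarith
  · exact (mul_eq_zero.1 h).resolve_left (div_ne_zero two_ne_zero hββ)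

theorem inner_fw_sum {δ : E} (hδ : δ ∈ D.Pi) (c : E → ℝ) :
    ⟪D.fw δ, ∑ β ∈ D.Pi, c β • β⟫ = c δ * (⟪δ, δ⟫ / 2) := by
  rw [inner_sum, Finset.sum_eq_single δ (fun β hβ hne => ?_) (absurd hδ)]
  · rw [real_inner_smul_right, inner_fw hδ hδ, if_pos rfl]
  · rw [real_inner_smul_right, inner_fw hδ hβ, if_neg hne.symm, mul_zero]

theorem inner_fw_nonneg {δ γ : E} (hδ : δ ∈ D.Pi) (hγ : γ ∈ D.Rpos) : 0 ≤ ⟪D.fw δ, γ⟫ := by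
  obtain ⟨c, hc0, hc⟩ := D.pos_comb γ hγ
  rw [hc, inner_fw_sum hδ]
  exact mul_nonneg (hc0 δ) (div_nonneg real_inner_self_nonneg zero_le_two)

theorem eq_sum_inner_fw_smul {γ : E} (hγ : γ ∈ D.Rpos) :
    γ = ∑ δ ∈ D.Pi, (2 * ⟪D.fw δ, γ⟫ / ⟪δ, δ⟫) • δ := by
  obtain ⟨c, -, hc⟩ := D.pos_comb γ hγ
  nth_rewrite 1 [hc]
  refine Finset.sum_congr rfl fun δ hδ => ?_
  have hδδ : ⟪δ, δ⟫ ≠ 0 := inner_self_ne_zero.2 (ne_zero_of_mem_Rpos (D.simple_subset hδ))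
  rw [hc, inner_fw_sum hδ]
  field_simp

theorem exists_inner_fw_pos {γ : E} (hγ : γ ∈ D.Rpos) {β : E} (hβ : ∀ c : ℝ, γ ≠ c • β) :
    ∃ δ ∈ D.Pi, δ ≠ β ∧ 0 < ⟪D.fw δ, γ⟫ := by
  by_contra! h
  have hzero : ∀ δ ∈ D.Pi, δ ≠ β → (2 * ⟪D.fw δ, γ⟫ / ⟪δ, δ⟫) • δ = 0 := fun δ hδ hne => by
    rw [le_antisymm (h δ hδ hne) (inner_fw_nonneg hδ hγ)]
    simp
  rw [eq_sum_inner_fw_smul hγ] at hβ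
  by_cases hβPi : β ∈ D.Pi
  · exact hβ _ (Finset.sum_eq_single_of_mem β hβPi fun δ hδ hne => hzero δ hδ hne)
  · exact hβ 0 (by
      rw [zero_smul]
      exact Finset.sum_eq_zero fun δ hδ => hzero δ hδ (ne_of_mem_of_not_mem hδ hβPi))

theorem pos_of_smul_mem_Rpos {α : E} (hα : α ∈ D.Rpos) {c : ℝ} (hc : c • α ∈ D.Rpos) :
    0 < c := by
  obtain ⟨δ, hδ, -, hpos⟩ :=
    exists_inner_fw_pos hα (β := 0) (by simpa using ne_zero_of_mem_Rpos hα)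
  have h := inner_fw_nonneg hδ hc
  rw [real_inner_smul_right] at h
  refine lt_of_le_of_ne (nonneg_of_mul_nonneg_left h hpos) ?_
  rintro rfl
  exact ne_zero_of_mem_Rpos hc (zero_smul _ _)

theorem rRefl_mem_Rpos {α γ : E} (hα : α ∈ D.Pi) (hγ : γ ∈ D.Rpos)
    (hpar : ∀ c : ℝ, γ ≠ c • α) : rRefl α γ ∈ D.Rpos := by
  obtain ⟨δ, hδ, hδα, hpos⟩ := exists_inner_fw_pos hγ hpar
  have hfix : ⟪D.fw δ, rRefl α γ⟫ = ⟪D.fw δ, γ⟫ := by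
    rw [rRefl_apply, inner_sub_right, real_inner_smul_right, inner_fw hδ hα, if_neg hδα,
      mul_zero, sub_zero]
  by_contra h
  have := inner_fw_nonneg hδ <| neg_mem_Rpos_of_notMem
    (rRefl_mem_R (mem_R_of_mem_Pi hα) (D.pos_subset hγ)) h
  rw [inner_neg_right, hfix] at this
  linarith

theorem dominantI_of_forall_inner_nonneg {J : Finset E} (hJ : J ⊆ D.Pi) {z : E}
    (h : ∀ β ∈ J, 0 ≤ ⟪z, β⟫) : D.DominantI J z := by
  rintro γ ⟨hγ, hγJ⟩
  rw [eq_sum_inner_fw_smul hγ, inner_sum]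
  refine Finset.sum_nonneg fun δ hδ => ?_
  rw [real_inner_smul_right]
  by_cases hδJ : δ ∈ J
  · exact mul_nonneg (div_nonneg (mul_nonneg zero_le_two (inner_fw_nonneg hδ hγ))
      real_inner_self_nonneg) (h δ hδJ)
  · have hker : γ ∈ LinearMap.ker (innerₛₗ ℝ (D.fw δ)) :=
      Submodule.span_le.2 (fun β hβ => by
        simp [inner_fw hδ (hJ hβ), (ne_of_mem_of_not_mem hβ hδJ).symm]) hγJ
    rw [LinearMap.mem_ker, innerₛₗ_apply_apply] at hker
    simp [hker]

variable (D) in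
/-- Lines rather than roots, so that `β` and `2β` of a non-reduced system count once. -/
def inversionLines (y : E) : Finset (Submodule ℝ E) :=
  (D.Rpos.filter fun β => ⟪y, β⟫ < 0).image (ℝ ∙ ·)

variable (D) in
def inversionCount (y : E) : ℕ := (D.inversionLines y).card

theorem mem_inversionLines {y : E} {L : Submodule ℝ E} :
    L ∈ D.inversionLines y ↔ ∃ β ∈ D.Rpos, ⟪y, β⟫ < 0 ∧ (ℝ ∙ β) = L := by
  simp [inversionLines, and_assoc]

theorem span_mem_inversionLines_iff {y α : E} (hα : α ∈ D.Rpos) :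
    (ℝ ∙ α) ∈ D.inversionLines y ↔ ⟪y, α⟫ < 0 := by
  refine mem_inversionLines.trans ⟨?_, fun h => ⟨α, hα, h, rfl⟩⟩
  rintro ⟨β, hβ, hneg, hL⟩
  obtain ⟨c, rfl⟩ := Submodule.mem_span_singleton.1 (hL ▸ Submodule.mem_span_singleton_self β)
  rw [real_inner_smul_right] at hneg
  exact neg_of_mul_neg_right hneg (pos_of_smul_mem_Rpos hα hβ).le

theorem inversionCount_eq_zero_of_dominant {y : E} (hy : D.Dominant y) :
    D.inversionCount y = 0 := by
  simpa [inversionCount, inversionLines, Finset.filter_eq_empty_iff] using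
    fun β hβ => hy β hβ

theorem map_rRefl_mem_inversionLines_erase {α y : E} (hα : α ∈ D.Pi) {L : Submodule ℝ E}
    (hL : L ∈ (D.inversionLines y).erase (ℝ ∙ α)) :
    L.map (rRefl α).toLinearMap ∈ (D.inversionLines (rRefl α y)).erase (ℝ ∙ α) := by
  obtain ⟨hLα, hL⟩ := Finset.mem_erase.1 hL
  obtain ⟨β, hβ, hneg, rfl⟩ := mem_inversionLines.1 hL
  have hmap : ∀ x : E, (ℝ ∙ x).map (rRefl α).toLinearMap = ℝ ∙ rRefl α x := fun x => by
    rw [Submodule.map_span, Set.image_singleton]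
    rfl
  refine Finset.mem_erase.2
    ⟨fun h => hLα ?_, mem_inversionLines.2 ⟨rRefl α β, ?_, ?_, (hmap β).symm⟩⟩
  · apply Submodule.map_injective_of_injective (rRefl α).injective
    rw [h, hmap, rRefl_self, ← Set.neg_singleton, Submodule.span_neg]
  · refine rRefl_mem_Rpos hα hβ fun c hc => hLα ?_
    have hc0 : c ≠ 0 := by rintro rfl; exact ne_zero_of_mem_Rpos hβ (by simpa using hc)
    rw [hc, Submodule.span_singleton_smul_eq hc0.isUnit]
  · rwa [← inner_rRefl_left, rRefl_rRefl]

theorem card_inversionLines_erase_rRefl {α : E} (hα : α ∈ D.Pi) (y : E) :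
    ((D.inversionLines (rRefl α y)).erase (ℝ ∙ α)).card =
      ((D.inversionLines y).erase (ℝ ∙ α)).card := by
  have hinj : ∀ s : Set (Submodule ℝ E), Set.InjOn (Submodule.map (rRefl α).toLinearMap) s :=
    fun _ => (Submodule.map_injective_of_injective (rRefl α).injective).injOn
  refine le_antisymm ?_ (Finset.card_le_card_of_injOn _
    (fun L hL => map_rRefl_mem_inversionLines_erase hα hL) (hinj _))
  refine Finset.card_le_card_of_injOn _ (fun L hL => ?_) (hinj _)
  have h := map_rRefl_mem_inversionLines_erase (y := rRefl α y) hα hL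
  rwa [rRefl_rRefl] at h

theorem inversionCount_rRefl_add_one {α y : E} (hα : α ∈ D.Pi) (hy : ⟪y, α⟫ < 0) :
    D.inversionCount (rRefl α y) + 1 = D.inversionCount y := by
  have hαpos := D.simple_subset hα
  have hmem : (ℝ ∙ α) ∈ D.inversionLines y := (span_mem_inversionLines_iff hαpos).2 hy
  have hnotMem : (ℝ ∙ α) ∉ D.inversionLines (rRefl α y) := by
    rw [span_mem_inversionLines_iff hαpos, inner_rRefl_self_right]
    linarith
  have h := card_inversionLines_erase_rRefl hα y
  rw [Finset.erase_eq_of_notMem hnotMem] at h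
  rw [inversionCount, inversionCount, h, Finset.card_erase_add_one hmem]

theorem inversionCount_le_rRefl_add_one {α : E} (hα : α ∈ D.Pi) (y : E) :
    D.inversionCount y ≤ D.inversionCount (rRefl α y) + 1 := by
  have hle := Finset.pred_card_le_card_erase (s := D.inversionLines y) (a := ℝ ∙ α)
  have herase := Finset.card_erase_le (s := D.inversionLines (rRefl α y)) (a := ℝ ∙ α)
  rw [← card_inversionLines_erase_rRefl hα] at hle
  unfold inversionCount
  omega

/-- The exchange condition. -/
theorem exists_sublist_prod_eq_rRefl_mul {l : List (E ≃ₗᵢ[ℝ] E)} (hl : IsWord D.Pi l) {α : E}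
    (hα : α ∈ D.Pi) (hneg : l.prod⁻¹ α ∉ D.Rpos) :
    ∃ l' : List (E ≃ₗᵢ[ℝ] E), l'.Sublist l ∧ l'.prod = rRefl α * l.prod ∧
      l'.length + 1 = l.length := by
  induction l using List.reverseRecOn with
  | nil => exact absurd (D.simple_subset hα) (by simpa using hneg)
  | append_singleton t g ih =>
    obtain ⟨ht, hg⟩ := IsWord.append_iff.1 hl
    obtain ⟨δ, hδ, rfl⟩ := hg _ (List.mem_singleton_self _)
    have happ : (t ++ [rRefl δ]).prod⁻¹ α = rRefl δ (t.prod⁻¹ α) := by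
      rw [List.prod_append, List.prod_singleton, mul_inv_rev, rRefl_inv]
      rfl
    by_cases hγ : t.prod⁻¹ α ∈ D.Rpos
    -- `s_δ` sends the positive root `t⁻¹ α` to a negative one, so `t⁻¹ α ∈ ℝδ` and
    -- `s_δ = t⁻¹ s_α t`: the last letter cancels against `s_α`.
    · obtain ⟨c, hc⟩ : ∃ c : ℝ, t.prod⁻¹ α = c • δ := by
        by_contra! h
        exact hneg (happ ▸ rRefl_mem_Rpos hδ hγ h)
      have hc0 : c ≠ 0 := by
        rintro rfl
        exact ne_zero_of_mem_Rpos hγ (by simpa using hc)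
      have hconj : rRefl δ = t.prod⁻¹ * rRefl α * t.prod := by
        rw [← rRefl_smul hc0, ← hc, rRefl_conj, inv_inv]
      refine ⟨t, List.sublist_append_left t _, ?_, by simp⟩
      rw [List.prod_append, List.prod_singleton, hconj]
      simp only [mul_assoc, mul_inv_cancel_left]
      rw [← mul_assoc, rRefl_mul_self, one_mul]
    · obtain ⟨t', hsub, hprod, hlen⟩ := ih ht hγ
      refine ⟨t' ++ [rRefl δ], hsub.append_right _, ?_, by simp [← hlen]⟩
      rw [List.prod_append, List.prod_append, hprod, mul_assoc]

theorem simple_mem_RposI {J : Finset E} (hJ : J ⊆ D.Pi) {β : E} (hβ : β ∈ J) :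
    β ∈ D.RposI J :=
  ⟨D.simple_subset (hJ hβ), Submodule.subset_span hβ⟩

theorem inner_eq_zero_of_inv_apply_notMem_Rpos {J : Finset E} (hJ : J ⊆ D.Pi)
    {w : E ≃ₗᵢ[ℝ] E} (hw : w ∈ weylGen J) {ν : E} (hν : D.DominantI J ν)
    (hwν : D.DominantI J (w ν)) {β : E} (hβ : β ∈ J) (hneg : w⁻¹ β ∉ D.Rpos) :
    ⟪w ν, β⟫ = 0 := by
  have hw' : w⁻¹ ∈ weylGen J := inv_mem hw
  have hmem : -(w⁻¹ β) ∈ D.RposI J :=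
    ⟨neg_mem_Rpos_of_notMem (apply_mem_R (weylGen_mono hJ hw') (mem_R_of_mem_Pi (hJ hβ))) hneg,
      neg_mem (apply_mem_span_of_mem_weylGen hw' (Submodule.subset_span hβ))⟩
  have hle := hν _ hmem
  rw [inner_neg_right, ← w.inner_map_map, show w (w⁻¹ β) = β from w.apply_symm_apply β] at hle
  linarith [hwν β (simple_mem_RposI hJ hβ)]

theorem eq_of_dominantI {J : Finset E} (hJ : J ⊆ D.Pi) {w : E ≃ₗᵢ[ℝ] E} (hw : w ∈ weylGen J)
    {ν ν' : E} (hν : D.DominantI J ν) (hν' : D.DominantI J ν') (h : w ν = ν') : ν = ν' := by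
  obtain ⟨m, hm, rfl⟩ := exists_isWord_prod_eq hw
  clear hw
  induction hn : m.length using Nat.strong_induction_on generalizing m with
  | _ n ih =>
  match m, hm with
  | [], _ => simpa using h
  | g :: t, hm =>
    obtain ⟨⟨β, hβ, rfl⟩, ht⟩ := IsWord.cons_iff.1 hm
    have hprod : (rRefl β :: t).prod = rRefl β * t.prod := List.prod_cons
    rw [List.length_cons] at hn
    by_cases hpos : (rRefl β :: t).prod⁻¹ β ∈ D.Rpos
    · have hneg : t.prod⁻¹ β ∉ D.Rpos := by
        rw [hprod, mul_inv_rev, rRefl_inv] at hpos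
        rw [LinearIsometryEquiv.coe_mul, Function.comp_apply, rRefl_self, map_neg] at hpos
        simpa using neg_notMem_Rpos hpos
      obtain ⟨t', hsub, ht'prod, hlen⟩ :=
        exists_sublist_prod_eq_rRefl_mul (ht.mono hJ) (hJ hβ) hneg
      rw [← hprod] at ht'prod
      exact ih t'.length (by omega) t' (ht.sublist hsub) (ht'prod ▸ h) rfl
    · have hfix : rRefl β ν' = ν' := rRefl_eq_self_of_inner_eq_zero <| h ▸
        inner_eq_zero_of_inv_apply_notMem_Rpos hJ hm.prod_mem hν (h ▸ hν') hβ hpos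
      refine ih t.length (by omega) t ht ?_ rfl
      rw [← hfix, ← h, hprod]
      exact (rRefl_rRefl β _).symm

theorem Dominant.dominantI {y : E} (hy : D.Dominant y) (J : Finset E) : D.DominantI J y :=
  fun α hα => hy α hα.1

theorem eq_of_dominant {w : E ≃ₗᵢ[ℝ] E} (hw : w ∈ D.Weyl) {ν ν' : E} (hν : D.Dominant ν)
    (hν' : D.Dominant ν') (h : w ν = ν') : ν = ν' :=
  eq_of_dominantI subset_rfl hw (hν.dominantI _) (hν'.dominantI _) h

theorem exists_inner_neg_of_not_dominantI {J : Finset E} (hJ : J ⊆ D.Pi) {z : E}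
    (h : ¬ D.DominantI J z) : ∃ β ∈ J, ⟪z, β⟫ < 0 := by
  by_contra! h'
  exact h (dominantI_of_forall_inner_nonneg hJ h')

theorem len_le_length {l : List (E ≃ₗᵢ[ℝ] E)} (hl : IsWord D.Pi l) : D.len l.prod ≤ l.length :=
  Nat.sInf_le ⟨l, hl, rfl, rfl⟩

theorem exists_isWord_length_eq_len {w : E ≃ₗᵢ[ℝ] E} (hw : w ∈ D.Weyl) :
    ∃ l : List (E ≃ₗᵢ[ℝ] E), IsWord D.Pi l ∧ l.prod = w ∧ l.length = D.len w := by
  obtain ⟨l, hl, hprod⟩ := exists_isWord_prod_eq hw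
  exact Nat.sInf_mem (s := {n | ∃ l : List (E ≃ₗᵢ[ℝ] E), IsWord D.Pi l ∧ l.prod = w ∧
    l.length = n}) ⟨_, l, hl, hprod, rfl⟩

theorem inversionCount_le_length {l : List (E ≃ₗᵢ[ℝ] E)} (hl : IsWord D.Pi l) {y : E}
    (hy : D.Dominant (l.prod⁻¹ y)) : D.inversionCount y ≤ l.length := by
  induction l generalizing y with
  | nil => simp [inversionCount_eq_zero_of_dominant (by simpa using hy)]
  | cons g t ih =>
    obtain ⟨⟨α, hα, rfl⟩, ht⟩ := IsWord.cons_iff.1 hl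
    rw [inv_prod_cons_rRefl_apply] at hy
    have := ih ht hy
    have := inversionCount_le_rRefl_add_one hα y
    rw [List.length_cons]
    omega

theorem inversionCount_le_len {w : E ≃ₗᵢ[ℝ] E} (hw : w ∈ D.Weyl) {y : E}
    (hy : D.Dominant (w⁻¹ y)) : D.inversionCount y ≤ D.len w := by
  obtain ⟨l, hl, rfl, hlen⟩ := exists_isWord_length_eq_len hw
  exact hlen ▸ inversionCount_le_length hl hy

variable (D) in
structure IsVbarWord (y : E) (t : List (E ≃ₗᵢ[ℝ] E)) : Prop where
  isWord : IsWord D.Pi t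
  dominant : D.Dominant (t.prod⁻¹ y)
  length_eq : t.length = D.inversionCount y

theorem IsVbarWord.isVbar {y : E} {t : List (E ≃ₗᵢ[ℝ] E)} (h : D.IsVbarWord y t) :
    D.IsVbar y t.prod :=
  ⟨h.isWord.prod_mem, h.dominant, fun _ hu hdom =>
    (len_le_length h.isWord).trans (h.length_eq.le.trans (inversionCount_le_len hu hdom))⟩

theorem IsVbarWord.exists_sublist_rRefl {z α : E} {t : List (E ≃ₗᵢ[ℝ] E)}
    (h : D.IsVbarWord z t) (hα : α ∈ D.Pi) (hz : ⟪z, α⟫ < 0) :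
    ∃ t', t'.Sublist t ∧ D.IsVbarWord (rRefl α z) t' := by
  have hneg : t.prod⁻¹ α ∉ D.Rpos := fun hpos => by
    have := h.dominant _ hpos
    rw [(t.prod⁻¹).inner_map_map] at this
    linarith
  obtain ⟨t', hsub, hprod, hlen⟩ := exists_sublist_prod_eq_rRefl_mul h.isWord hα hneg
  refine ⟨t', hsub, h.isWord.sublist hsub, ?_, ?_⟩
  · rw [hprod, mul_inv_rev, rRefl_inv]
    simpa only [LinearIsometryEquiv.coe_mul, Function.comp_apply, rRefl_rRefl] using h.dominant
  · have := inversionCount_rRefl_add_one hα hz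
    have := h.length_eq
    omega

theorem exists_sublist_isVbarWord {l : List (E ≃ₗᵢ[ℝ] E)} (hl : IsWord D.Pi l) {y : E}
    (hy : D.Dominant (l.prod⁻¹ y)) : ∃ t, t.Sublist l ∧ D.IsVbarWord y t := by
  induction l generalizing y with
  | nil =>
    refine ⟨[], .refl _, fun _ h => by simp at h, hy, ?_⟩
    rw [inversionCount_eq_zero_of_dominant (by simpa using hy), List.length_nil]
  | cons g l ih =>
    obtain ⟨⟨α, hα, rfl⟩, hl'⟩ := IsWord.cons_iff.1 hl
    rw [inv_prod_cons_rRefl_apply] at hy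
    obtain ⟨t, hsub, ht⟩ := ih hl' hy
    rcases lt_trichotomy ⟪y, α⟫ 0 with hneg | hzero | hpos
    · refine ⟨rRefl α :: t, hsub.cons_cons _, IsWord.cons_iff.2 ⟨⟨α, hα, rfl⟩, ht.isWord⟩, ?_, ?_⟩
      · rw [inv_prod_cons_rRefl_apply]
        exact ht.dominant
      · rw [List.length_cons, ht.length_eq, inversionCount_rRefl_add_one hα hneg]
    · rw [rRefl_eq_self_of_inner_eq_zero hzero] at ht
      exact ⟨t, hsub.cons _, ht⟩
    · obtain ⟨t', hsub', ht'⟩ :=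
        ht.exists_sublist_rRefl hα (by rwa [inner_rRefl_self_right, neg_lt_zero])
      rw [rRefl_rRefl] at ht'
      exact ⟨t', hsub'.trans (hsub.cons _), ht'⟩

theorem IsVbar.len_eq {y : E} {v : E ≃ₗᵢ[ℝ] E} (h : D.IsVbar y v) :
    D.len v = D.inversionCount y := by
  obtain ⟨hv, hdom, hmin⟩ := h
  obtain ⟨l, hl, rfl⟩ := exists_isWord_prod_eq hv
  obtain ⟨t, -, ht⟩ := exists_sublist_isVbarWord hl hdom
  exact le_antisymm ((hmin _ ht.isWord.prod_mem ht.dominant).trans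
    ((len_le_length ht.isWord).trans ht.length_eq.le)) (inversionCount_le_len hv hdom)

theorem descent_induction {I : Finset E} (hI : I ⊆ D.Pi) {y : E} (hy : D.DominantI I y)
    {motive : E → Prop} (base : motive y)
    (step : ∀ z, ∀ β ∈ I, ⟪z, β⟫ < 0 → motive (rRefl β z) → motive z)
    {w : E ≃ₗᵢ[ℝ] E} (hw : w ∈ weylGen I) {z : E} (hz : w z = y) : motive z := by
  induction hn : D.inversionCount z using Nat.strong_induction_on generalizing w z with
  | _ n ih =>
  by_cases hzI : D.DominantI I z
  · obtain rfl := eq_of_dominantI hI hw hzI hy hz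
    exact base
  · obtain ⟨β, hβ, hneg⟩ := exists_inner_neg_of_not_dominantI hI hzI
    have := inversionCount_rRefl_add_one (hI hβ) hneg
    refine step z β hβ hneg (ih _ (by omega) (mul_mem hw (rRefl_mem_weylGen hβ)) ?_ rfl)
    rw [LinearIsometryEquiv.coe_mul, Function.comp_apply, rRefl_rRefl, hz]

theorem inversionCount_lt_of_descent {I : Finset E} (hI : I ⊆ D.Pi) {y : E}
    (hy : D.DominantI I y) {w : E ≃ₗᵢ[ℝ] E} (hw : w ∈ weylGen I) {z : E} (hz : w z = y)
    (hne : z ≠ y) : D.inversionCount y < D.inversionCount z := by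
  refine (descent_induction hI hy
    (motive := fun z => z = y ∨ D.inversionCount y < D.inversionCount z) (.inl rfl)
    (fun z β hβ hneg ih => .inr ?_) hw hz).resolve_left hne
  have := inversionCount_rRefl_add_one (hI hβ) hneg
  rcases ih with h | h
  · rw [← h]
    omega
  · omega

theorem IsVbarWord.exists_sublist_of_descent {I : Finset E} (hI : I ⊆ D.Pi) {y : E}
    (hy : D.DominantI I y) {w : E ≃ₗᵢ[ℝ] E} (hw : w ∈ weylGen I) {z : E} (hz : w z = y)
    {t : List (E ≃ₗᵢ[ℝ] E)} (ht : D.IsVbarWord z t) :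
    ∃ t₀, t₀.Sublist t ∧ D.IsVbarWord y t₀ := by
  refine descent_induction hI hy
    (motive := fun z => ∀ t, D.IsVbarWord z t → ∃ t₀, t₀.Sublist t ∧ D.IsVbarWord y t₀)
    (fun t ht => ⟨t, .refl t, ht⟩) (fun z β hβ hneg ih t ht => ?_) hw hz t ht
  obtain ⟨t', hsub, ht'⟩ := ht.exists_sublist_rRefl (hI hβ) hneg
  obtain ⟨t₀, hsub₀, ht₀⟩ := ih t' ht'
  exact ⟨t₀, hsub₀.trans hsub, ht₀⟩

end RootData

end

theorem statement_8_general (D : RootData V) (I : Finset V) (hI : I ⊆ D.Pi)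
    (lam : V) (mu : V)
    (hlt : D.ltEmpty mu lam)
    (muI : V) (hmuI : muI ∈ D.PplusI I) (hmuIorb : ∃ w ∈ D.WeylP I, w mu = muI) :
    D.ltEmpty muI lam := by
  obtain ⟨⟨lamP, muP, hlamP, hmuP, ⟨w₁, hw₁, rfl⟩, hlam, hcases⟩, hne⟩ := hlt
  obtain ⟨u, hu, rfl⟩ := hmuIorb
  have huw₁ : u * w₁ ∈ D.Weyl := mul_mem (RootData.weylP_le_weyl hI hu) hw₁
  rcases hcases with ⟨hpre, hneP⟩ | ⟨rfl, vl, vm, hvl, hvm, l, hl, hlprod, hllen, l', hl'sub, rfl⟩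
  · refine ⟨⟨lamP, muP, hlamP, hmuP, ⟨u * w₁, huw₁, rfl⟩, hlam, .inl ⟨hpre, hneP⟩⟩,
      fun h => hneP ?_⟩
    obtain ⟨w₂, hw₂, rfl⟩ := hlam
    refine RootData.eq_of_dominant (mul_mem (inv_mem hw₂) huw₁) hlamP.2 hmuP.2 ?_
    show w₂⁻¹ (u (w₁ lamP)) = muP
    rw [h]
    exact w₂.symm_apply_apply muP
  · obtain ⟨t, htsub, ht⟩ :=
      RootData.exists_sublist_isVbarWord (IsWord.sublist hl hl'sub) hvl.2.1
    obtain ⟨t₀, ht₀sub, ht₀⟩ := ht.exists_sublist_of_descent hI hmuI.2 hu rfl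
    refine ⟨⟨lamP, lamP, hlamP, hmuP, ⟨u * w₁, huw₁, rfl⟩, hlam, .inr ⟨rfl, t₀.prod, vm,
      ht₀.isVbar, hvm, l, hl, hlprod, hllen, t₀, (ht₀sub.trans htsub).trans hl'sub, rfl⟩⟩, ?_⟩
    intro heq
    have hlt := RootData.inversionCount_lt_of_descent hI (heq ▸ hmuI.2) hu heq hne
    refine hlt.not_ge ?_
    calc D.inversionCount (w₁ lamP) = t.length := ht.length_eq.symm
      _ ≤ l.length := (htsub.trans hl'sub).length_le
      _ = D.len vm := hllen
      _ = D.inversionCount lam := hvm.len_eq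

/-- Let `λ ∈ P_I^+` and `μ ∈ P` with `μ₊ = λ₊` (i.e. `μ ∈ W·λ`).
If `μ <_∅ λ`, then `μ_{I,+} <_∅ λ`, where `μ_{I,+}` is the unique element of
`W_I·μ ∩ P_I^+`. -/
theorem statement_8 (D : RootData V) (I : Finset V) (hI : I ⊆ D.Pi)
    (lam : V) (hlam : lam ∈ D.PplusI I) (mu : V) (hmu : mu ∈ D.P)
    (horb : ∃ w ∈ D.Weyl, w lam = mu)
    (hlt : D.ltEmpty mu lam)
    (muI : V) (hmuI : muI ∈ D.PplusI I) (hmuIorb : ∃ w ∈ D.WeylP I, w mu = muI) :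
    D.ltEmpty muI lam :=
  statement_8_general D I hI lam mu hlt muI hmuI hmuIorb
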